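/- arXiv:2006.11685 — 4 statements merged into one kernel-verified Lean document; each statement's English description precedes it below -/
import Mathlib

section
/- Let Z be a finite subset of {0,1}^d and let Δ_simplex be the set {λ ∈ ℝ^d : λ_i > 0, Σ_i λ_i = 1}. For a finite nonempty set V ⊆ ℝ^d, the function f(λ) = E_{η∼N(0,I_d)}[ max_{v∈V} ⟨v, diag(λ_i^{-1/2}) η⟩ ] is convex on the set of λ with all coordinates strictly positive. -/
/-!
Write the functional as `W(λ^{-1/2})` with `W(σ) = E max_{v ∈ V} ⟨v, diag(σ) η⟩`. As an expectation
of a maximum of linear functions of `σ`, `W` is convex; as `η` is symmetric, `W` is unchanged when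
the sign of one `σ_i` is flipped. A convex function that is even in each coordinate is
nondecreasing in each `|σ_i|`, so `W` is monotone on the nonnegative orthant. Since
`λ_i ↦ λ_i^{-1/2}` is convex and positive, `W(λ^{-1/2})` is convex, being a monotone convex
function of a convex map. No Gaussian comparison inequality is needed.
-/

open MeasureTheory ProbabilityTheory Function Set
open scoped NNReal

section Convexity

variable {ι : Type*} [DecidableEq ι]

theorem Integrable.finset_sup' {α β : Type*} [MeasurableSpace α] {μ : Measure α} {V : Finset β}
    (hV : V.Nonempty) {f : β → α → ℝ} (hf : ∀ v ∈ V, Integrable (f v) μ) :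
    Integrable (fun x => V.sup' hV fun v => f v x) μ :=
  (Finset.sup'_induction hV f (p := (Integrable · μ)) (fun _ hg _ hh => hg.sup hh) hf).congr
    (ae_of_all _ fun x => Finset.sup'_apply hV f x)

theorem ConvexOn.finset_sup' {E β : Type*} [AddCommMonoid E] [Module ℝ E] {s : Set E}
    {V : Finset β} (hV : V.Nonempty) {f : β → E → ℝ} (hf : ∀ v ∈ V, ConvexOn ℝ s (f v)) :
    ConvexOn ℝ s fun x => V.sup' hV fun v => f v x := by
  obtain ⟨v₀, hv₀⟩ := hV
  refine ⟨(hf v₀ hv₀).1, fun x hx y hy a b ha hb hab => Finset.sup'_le _ _ fun v hv => ?_⟩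
  exact ((hf v hv).2 hx hy ha hb hab).trans (add_le_add
    (smul_le_smul_of_nonneg_left (Finset.le_sup' (f · x) hv) ha)
    (smul_le_smul_of_nonneg_left (Finset.le_sup' (f · y) hv) hb))

theorem convexOn_integral {α E : Type*} [MeasurableSpace α] {μ : Measure α} [AddCommMonoid E]
    [Module ℝ E] {s : Set E} {f : E → α → ℝ} (hs : Convex ℝ s) (hf : ∀ a, ConvexOn ℝ s (f · a))
    (hint : ∀ x ∈ s, Integrable (f x) μ) : ConvexOn ℝ s fun x => ∫ a, f x a ∂μ := by
  refine ⟨hs, fun x hx y hy a b ha hb hab => ?_⟩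
  rw [smul_eq_mul, smul_eq_mul, ← integral_const_mul, ← integral_const_mul,
    ← integral_add ((hint x hx).const_mul a) ((hint y hy).const_mul b)]
  exact integral_mono (hint _ (hs hx hy ha hb hab))
    (((hint x hx).const_mul a).add ((hint y hy).const_mul b)) fun η => (hf η).2 hx hy ha hb hab

theorem ConvexOn.comp_update {F : (ι → ℝ) → ℝ} (hF : ConvexOn ℝ univ F) (ρ : ι → ℝ) (i : ι) :
    ConvexOn ℝ univ fun x => F (update ρ i x) := by
  refine ⟨convex_univ, fun x _ y _ a b ha hb hab => ?_⟩
  have hupdate : update ρ i (a • x + b • y) = a • update ρ i x + b • update ρ i y := by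
    ext j
    rcases eq_or_ne j i with rfl | hj
    · simp
    · simp [hj, ← add_mul, hab]
  dsimp only
  rw [hupdate]
  exact hF.2 trivial trivial ha hb hab

theorem ConvexOn.le_update_of_abs_le {F : (ι → ℝ) → ℝ} (hF : ConvexOn ℝ univ F) {ρ : ι → ℝ}
    {i : ι} {s t : ℝ} (heven : F (update ρ i (-t)) = F (update ρ i t)) (hst : |s| ≤ t) :
    F (update ρ i s) ≤ F (update ρ i t) := by
  have hs : s ∈ segment ℝ (-t) t := by
    rw [segment_eq_Icc (by linarith [abs_nonneg s])]
    exact abs_le.1 hst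
  simpa [heven] using (hF.comp_update ρ i).le_on_segment trivial trivial hs

theorem ConvexOn.le_of_forall_abs_le [Fintype ι] {F : (ι → ℝ) → ℝ} (hF : ConvexOn ℝ univ F)
    (heven : ∀ σ i, F (update σ i (-σ i)) = F σ) {σ τ : ι → ℝ} (h : ∀ i, |σ i| ≤ τ i) :
    F σ ≤ F τ := by
  suffices ∀ s : Finset ι, F (s.piecewise σ τ) ≤ F τ by simpa using this Finset.univ
  intro s
  induction s using Finset.induction_on with
  | empty => simp
  | insert i s hi ih =>
    have hρ : s.piecewise σ τ i = τ i := Finset.piecewise_eq_of_notMem _ _ _ hi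
    refine le_trans ?_ ih
    rw [Finset.piecewise_insert]
    conv_rhs => rw [← update_eq_self i (s.piecewise σ τ), hρ]
    refine hF.le_update_of_abs_le ?_ (h i)
    simpa [hρ] using heven (update (s.piecewise σ τ) i (τ i)) i

end Convexity

theorem convexOn_inv_sqrt : ConvexOn ℝ (Ioi 0) fun x : ℝ => (√x)⁻¹ := by
  refine ⟨convex_Ioi 0, fun x hx y hy a b ha hb hab => ?_⟩
  have hx' : 0 < √x := Real.sqrt_pos.2 hx
  have hy' : 0 < √y := Real.sqrt_pos.2 hy
  calc (√(a • x + b • y))⁻¹ ≤ (a • √x + b • √y)⁻¹ :=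
        inv_anti₀ (convex_Ioi (0 : ℝ) hx' hy' ha hb hab)
          (Real.strictConcaveOn_sqrt.concaveOn.2 (Ioi_subset_Ici_self hx)
            (Ioi_subset_Ici_self hy) ha hb hab)
    _ ≤ a • (√x)⁻¹ + b • (√y)⁻¹ := by
        simpa using (convexOn_zpow (𝕜 := ℝ) (-1)).2 hx' hy' ha hb hab

instance isNegInvariant_gaussianReal_zero (v : ℝ≥0) : (gaussianReal 0 v).IsNegInvariant :=
  ⟨gaussianReal_map_neg.trans (by simp)⟩

section ScaledWidth

variable {ι : Type*} [Fintype ι] (μ : Measure ℝ) (V : Finset (ι → ℝ)) (hV : V.Nonempty)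

/-- `E max_{v ∈ V} ⟨v, diag(σ) η⟩` for `η` with i.i.d. coordinates of law `μ`. -/
noncomputable def scaledWidth (σ : ι → ℝ) : ℝ :=
  ∫ η, V.sup' hV (fun v => ∑ i, v i * η i * σ i) ∂Measure.pi fun _ => μ

variable {μ V}

theorem integrable_sup'_linear [IsProbabilityMeasure μ] (hμ : Integrable id μ) (σ : ι → ℝ) :
    Integrable (fun η => V.sup' hV fun v => ∑ i, v i * η i * σ i) (Measure.pi fun _ => μ) := by
  have hcoord (i : ι) : Integrable (fun η : ι → ℝ => η i) (Measure.pi fun _ => μ) :=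
    (measurePreserving_eval (fun _ => μ) i).integrable_comp_of_integrable hμ
  exact Integrable.finset_sup' hV fun v _ =>
    integrable_finsetSum _ fun i _ => ((hcoord i).const_mul (v i)).mul_const (σ i)

theorem convexOn_scaledWidth [IsProbabilityMeasure μ] (hμ : Integrable id μ) :
    ConvexOn ℝ univ (scaledWidth μ V hV) := by
  refine convexOn_integral convex_univ (fun η => ?_) fun σ _ => integrable_sup'_linear hV hμ σ
  refine ConvexOn.finset_sup' hV fun v _ => ⟨convex_univ, fun σ _ τ _ a b _ _ _ => le_of_eq ?_⟩
  simp only [Pi.add_apply, Pi.smul_apply, smul_eq_mul, Finset.mul_sum, ← Finset.sum_add_distrib]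
  exact Finset.sum_congr rfl fun i _ => by ring

theorem measurePreserving_update_neg [DecidableEq ι] [SigmaFinite μ] [μ.IsNegInvariant] (i : ι) :
    MeasurePreserving (fun η : ι → ℝ => update η i (-η i)) (Measure.pi fun _ => μ)
      (Measure.pi fun _ => μ) := by
  convert measurePreserving_pi (fun _ => μ) (fun _ => μ)
    (f := fun j => if j = i then Neg.neg else id) fun j => ?_ using 1
  · ext η j
    rcases eq_or_ne j i with rfl | hj <;> simp [*]
  · split_ifs
    exacts [Measure.measurePreserving_neg μ, MeasurePreserving.id μ]

theorem scaledWidth_update_neg [DecidableEq ι] [SigmaFinite μ] [μ.IsNegInvariant] (σ : ι → ℝ)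
    (i : ι) : scaledWidth μ V hV (update σ i (-σ i)) = scaledWidth μ V hV σ := by
  have hflip := measurePreserving_update_neg (μ := μ) i
  unfold scaledWidth
  rw [← hflip.map_eq, integral_map hflip.measurable.aemeasurable, hflip.map_eq]
  · congr 1 with η
    refine Finset.sup'_congr hV rfl fun v _ => Finset.sum_congr rfl fun j _ => ?_
    rcases eq_or_ne j i with rfl | hj <;> simp [*]
  · exact (Continuous.finset_sup'_apply hV fun v _ => by fun_prop).aestronglyMeasurable

end ScaledWidth

theorem convex_setOf_forall_pos {ι : Type*} : Convex ℝ {x : ι → ℝ | ∀ i, 0 < x i} :=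
  fun _ hx _ hy _ _ ha hb hab i => convex_Ioi (0 : ℝ) (hx i) (hy i) ha hb hab

/-- The map `λ ↦ E[max_{v∈V} ⟨v, diag(λ_i^{-1/2}) η⟩]` is convex on the set of
vectors `λ` with all coordinates strictly positive. -/
theorem gaussian_width_design_convex
    {d : ℕ} (V : Finset (Fin d → ℝ)) (hV : V.Nonempty) :
    ConvexOn ℝ {lam : Fin d → ℝ | ∀ i, 0 < lam i}
      (fun lam => ∫ η, V.sup' hV (fun v => ∑ i, v i * η i / Real.sqrt (lam i))
        ∂(Measure.pi fun _ : Fin d => gaussianReal 0 1)) := by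
  have hwidth : ConvexOn ℝ univ (scaledWidth (gaussianReal 0 1) V hV) :=
    convexOn_scaledWidth hV (memLp_one_iff_integrable.1 (memLp_id_gaussianReal' 1 (by simp)))
  have hmono {σ τ : Fin d → ℝ} (hσ : 0 ≤ σ) (hστ : σ ≤ τ) :
      scaledWidth (gaussianReal 0 1) V hV σ ≤ scaledWidth (gaussianReal 0 1) V hV τ :=
    hwidth.le_of_forall_abs_le (scaledWidth_update_neg hV) fun i =>
      (abs_of_nonneg (hσ i)).trans_le (hστ i)
  refine ⟨convex_setOf_forall_pos, fun lam hlam kap hkap a b ha hb hab => ?_⟩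
  simp only [div_eq_mul_inv]
  calc scaledWidth (gaussianReal 0 1) V hV (fun i => (√((a • lam + b • kap) i))⁻¹)
      ≤ scaledWidth (gaussianReal 0 1) V hV
          (a • (fun i => (√(lam i))⁻¹) + b • fun i => (√(kap i))⁻¹) :=
        hmono (fun i => by positivity) fun i => convexOn_inv_sqrt.2 (hlam i) (hkap i) ha hb hab
    _ ≤ _ := hwidth.2 trivial trivial ha hb hab
end

section
/- Let Z ⊂ ℝ^d be finite with a unique maximizer z* of z ↦ ⟨θ, z⟩, let X ⊂ ℝ^d be finite spanning ℝ^d, and for λ in the simplex over X let A(λ) = Σ_x λ_x x xᵀ. Define ρ*(λ) = max_{z∈Z\{z*}} ‖z*−z‖²_{A(λ)^{-1}} / ⟨θ, z*−z⟩² and γ*(λ) = (E_{η∼N(0,I)}[ max_{z∈Z\{z*}} ⟨z*−z, A(λ)^{-1/2}η⟩ / ⟨θ, z*−z⟩ ])². Then γ*(λ) ≤ d · ρ*(λ) for every λ with A(λ) invertible. -/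
/-!
Write `w_z = B (z* - z) / ⟨θ, z* - z⟩`, so that `γ*` is the square of `E[max_z ⟨w_z, η⟩]` and,
because `B` is symmetric with `B² = A⁻¹`, `ρ*` is `max_z ‖w_z‖²`. The maximum is attained at some
`w_z`, so Cauchy–Schwarz bounds its square by `max_z ‖w_z‖² · ‖η‖²`; Jensen's inequality
`(E F)² ≤ E F²` and `E ‖η‖² = d` then give the claim.
-/

open MeasureTheory ProbabilityTheory Matrix

section DotProduct

variable {ι R : Type*} [Fintype ι]

theorem dotProduct_self_eq_sum_sq [CommSemiring R] (v : ι → R) : v ⬝ᵥ v = ∑ i, v i ^ 2 := by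
  simp only [dotProduct, sq]

theorem sq_dotProduct_le_dotProduct_self_mul [CommRing R] [LinearOrder R] [IsStrictOrderedRing R]
    (v w : ι → R) : (v ⬝ᵥ w) ^ 2 ≤ (v ⬝ᵥ v) * (w ⬝ᵥ w) := by
  simpa only [dotProduct, sq] using Finset.sum_mul_sq_le_sq_mul_sq Finset.univ v w

theorem sq_sup'_dotProduct_le [CommRing R] [LinearOrder R] [IsStrictOrderedRing R] {κ : Type*}
    {s : Finset κ} (hs : s.Nonempty) (v : κ → ι → R) (w : ι → R) :
    (s.sup' hs fun k => v k ⬝ᵥ w) ^ 2 ≤ (s.sup' hs fun k => v k ⬝ᵥ v k) * (w ⬝ᵥ w) := by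
  obtain ⟨k, hk, hmax⟩ := s.exists_mem_eq_sup' hs fun k => v k ⬝ᵥ w
  rw [hmax]
  calc (v k ⬝ᵥ w) ^ 2 ≤ (v k ⬝ᵥ v k) * (w ⬝ᵥ w) := sq_dotProduct_le_dotProduct_self_mul _ _
    _ ≤ _ := mul_le_mul_of_nonneg_right (s.le_sup' (fun k => v k ⬝ᵥ v k) hk)
        (Finset.sum_nonneg fun i _ => mul_self_nonneg (w i))

theorem mulVec_dotProduct_mulVec_self_of_transpose_eq [CommSemiring R] {B : Matrix ι ι R}
    (hB : Bᵀ = B) (w : ι → R) : (B *ᵥ w) ⬝ᵥ (B *ᵥ w) = w ⬝ᵥ (B * B) *ᵥ w := by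
  rw [dotProduct_comm, dotProduct_mulVec, ← mulVec_transpose, hB, mulVec_mulVec, dotProduct_comm]

end DotProduct

theorem sq_integral_le_integral_sq {Ω : Type*} [MeasurableSpace Ω] {μ : Measure Ω}
    [IsProbabilityMeasure μ] {f : Ω → ℝ} (hf : MemLp f 2 μ) :
    (∫ ω, f ω ∂μ) ^ 2 ≤ ∫ ω, f ω ^ 2 ∂μ := by
  have hvar := variance_nonneg f μ
  rw [variance_eq_sub hf] at hvar
  simpa [sub_nonneg] using hvar

theorem measurable_sup'_dotProduct {ι κ : Type*} [Fintype ι] {s : Finset κ} (hs : s.Nonempty)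
    (v : κ → ι → ℝ) : Measurable fun η : ι → ℝ => s.sup' hs fun k => v k ⬝ᵥ η := by
  convert Finset.measurable_sup' hs (f := fun k (η : ι → ℝ) => v k ⬝ᵥ η)
    fun k _ => (continuous_const.dotProduct continuous_id).measurable using 1
  ext η
  rw [Finset.sup'_apply]

theorem sq_integral_sup'_dotProduct_le {ι κ : Type*} [Fintype ι] {μ : Measure (ι → ℝ)}
    [IsProbabilityMeasure μ] (hμ : Integrable (fun η => η ⬝ᵥ η) μ) {s : Finset κ}
    (hs : s.Nonempty) (v : κ → ι → ℝ) :
    (∫ η, s.sup' hs (fun k => v k ⬝ᵥ η) ∂μ) ^ 2 ≤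
      (s.sup' hs fun k => v k ⬝ᵥ v k) * ∫ η, η ⬝ᵥ η ∂μ := by
  set C := s.sup' hs fun k => v k ⬝ᵥ v k
  have hmeas := measurable_sup'_dotProduct hs v
  have hsq : Integrable (fun η => (s.sup' hs fun k => v k ⬝ᵥ η) ^ 2) μ :=
    (hμ.const_mul C).mono' (hmeas.pow_const 2).aestronglyMeasurable
      (ae_of_all _ fun η => by
        rw [Real.norm_of_nonneg (sq_nonneg _)]
        exact sq_sup'_dotProduct_le hs v η)
  calc _ ≤ ∫ η, (s.sup' hs fun k => v k ⬝ᵥ η) ^ 2 ∂μ :=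
        sq_integral_le_integral_sq ((memLp_two_iff_integrable_sq hmeas.aestronglyMeasurable).2 hsq)
    _ ≤ ∫ η, C * (η ⬝ᵥ η) ∂μ :=
        integral_mono hsq (hμ.const_mul C) fun η => sq_sup'_dotProduct_le hs v η
    _ = C * ∫ η, η ⬝ᵥ η ∂μ := integral_const_mul C _

section Gaussian

variable {ι : Type*} [Fintype ι]

theorem integral_sq_gaussianReal_zero (v : NNReal) : ∫ x, x ^ 2 ∂gaussianReal 0 v = v := by
  rw [← variance_of_integral_eq_zero aemeasurable_id' integral_id_gaussianReal,
    variance_fun_id_gaussianReal]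

theorem integrable_sq_eval_pi_gaussianReal (v : NNReal) (i : ι) :
    Integrable (fun η : ι → ℝ => η i ^ 2) (Measure.pi fun _ => gaussianReal 0 v) :=
  integrable_comp_eval (X := fun _ => ℝ) (i := i) (f := fun x : ℝ => x ^ 2)
    (memLp_id_gaussianReal 2).integrable_sq

theorem integrable_dotProduct_self_pi_gaussianReal (v : NNReal) :
    Integrable (fun η : ι → ℝ => η ⬝ᵥ η) (Measure.pi fun _ => gaussianReal 0 v) := by
  simp only [dotProduct_self_eq_sum_sq]
  exact integrable_finsetSum _ fun i _ => integrable_sq_eval_pi_gaussianReal v i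

theorem integral_dotProduct_self_pi_gaussianReal (v : NNReal) :
    ∫ η : ι → ℝ, η ⬝ᵥ η ∂(Measure.pi fun _ => gaussianReal 0 v) = Fintype.card ι * v := by
  simp only [dotProduct_self_eq_sum_sq]
  rw [integral_finsetSum _ fun i _ => integrable_sq_eval_pi_gaussianReal v i]
  simp only [integral_comp_eval (X := fun _ : ι => ℝ) (f := fun x : ℝ => x ^ 2) (by fun_prop),
    integral_sq_gaussianReal_zero]
  simp

end Gaussian

theorem gamma_le_dim_mul_rho_general
    {d : ℕ} (Z : Finset (Fin d → ℝ)) (θ zs : Fin d → ℝ)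
    (hZ2 : (Z.erase zs).Nonempty)
    (A B : Matrix (Fin d) (Fin d) ℝ)
    (hBsymm : B.transpose = B) (hB : B * B = A⁻¹) :
    (∫ η, (Z.erase zs).sup'
        hZ2 (fun z => (B.mulVec (zs - z)) ⬝ᵥ η / (θ ⬝ᵥ (zs - z)))
        ∂(Measure.pi fun _ : Fin d => gaussianReal 0 1)) ^ 2 ≤
    (d : ℝ) * (Z.erase zs).sup'
        hZ2 (fun z => ((zs - z) ⬝ᵥ (A⁻¹).mulVec (zs - z)) / (θ ⬝ᵥ (zs - z)) ^ 2) := by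
  set w : (Fin d → ℝ) → Fin d → ℝ := fun z => (θ ⬝ᵥ (zs - z))⁻¹ • B *ᵥ (zs - z)
  have hwidth : ∀ η : Fin d → ℝ, (Z.erase zs).sup' hZ2
      (fun z => (B *ᵥ (zs - z)) ⬝ᵥ η / (θ ⬝ᵥ (zs - z))) = (Z.erase zs).sup' hZ2 (w · ⬝ᵥ η) :=
    fun η => Finset.sup'_congr hZ2 rfl fun z _ => by
      rw [smul_dotProduct, smul_eq_mul, div_eq_inv_mul]
  have hvariance : (Z.erase zs).sup' hZ2
      (fun z => ((zs - z) ⬝ᵥ A⁻¹ *ᵥ (zs - z)) / (θ ⬝ᵥ (zs - z)) ^ 2) =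
      (Z.erase zs).sup' hZ2 (fun z => w z ⬝ᵥ w z) :=
    Finset.sup'_congr hZ2 rfl fun z _ => by
      rw [smul_dotProduct, dotProduct_smul, mulVec_dotProduct_mulVec_self_of_transpose_eq hBsymm,
        hB, smul_eq_mul, smul_eq_mul]
      ring
  simp only [hwidth, hvariance]
  simpa [integral_dotProduct_self_pi_gaussianReal, mul_comm] using
    sq_integral_sup'_dotProduct_le (integrable_dotProduct_self_pi_gaussianReal 1) hZ2 w

/-- `γ*(λ) ≤ d · ρ*(λ)`: the squared Gaussian width objective is at most the
dimension times the worst-case variance objective. -/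
theorem gamma_le_dim_mul_rho
    {d : ℕ} (X Z : Finset (Fin d → ℝ)) (θ zs : Fin d → ℝ)
    (hspan : Submodule.span ℝ (X : Set (Fin d → ℝ)) = ⊤)
    (hzs : zs ∈ Z) (hbest : ∀ z ∈ Z, z ≠ zs → θ ⬝ᵥ z < θ ⬝ᵥ zs)
    (hZ2 : (Z.erase zs).Nonempty)
    (lam : (Fin d → ℝ) → ℝ) (hlam0 : ∀ x ∈ X, 0 ≤ lam x)
    (hlams : ∑ x ∈ X, lam x = 1)
    (A B : Matrix (Fin d) (Fin d) ℝ)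
    (hA : A = ∑ x ∈ X, lam x • vecMulVec x x) (hAinv : IsUnit A)
    (hBsymm : B.transpose = B) (hB : B * B = A⁻¹) :
    (∫ η, (Z.erase zs).sup'
        hZ2 (fun z => (B.mulVec (zs - z)) ⬝ᵥ η / (θ ⬝ᵥ (zs - z)))
        ∂(Measure.pi fun _ : Fin d => gaussianReal 0 1)) ^ 2 ≤
    (d : ℝ) * (Z.erase zs).sup'
        hZ2 (fun z => ((zs - z) ⬝ᵥ (A⁻¹).mulVec (zs - z)) / (θ ⬝ᵥ (zs - z)) ^ 2) :=
  gamma_le_dim_mul_rho_general Z θ zs hZ2 A B hBsymm hB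
end

section
/- Let Z ⊂ {0,1}^d (viewed as indicator vectors of subsets of [d]) be the set of indicator vectors of size-k subsets of [d] (Top-K instance), and suppose θ ∈ ℝ^d satisfies θ₁ ≥ θ₂ ≥ ... ≥ θ_d with θ_k > θ_{k+1}. Define Δ_i = θ_i − θ_{k+1} for i ≤ k and Δ_i = θ_k − θ_i for i > k, and H = Σ_{i=1}^d Δ_i^{-2}. Then ρ* := inf_{λ∈simplex} max_{z∈Z, z≠z*} ‖z*−z‖²_{diag(λ)^{-1}} / ⟨θ, z*−z⟩² ≥ H, where z* is the indicator of {1,...,k} and ‖v‖²_{diag(λ)^{-1}} = Σ_i v_i²/λ_i. -/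
/-! Pigeonhole on the design: since `∑ λᵢ = 1`, some coordinate has `H λᵢ ≤ Δᵢ⁻²`. The single swap
that exchanges `i` with the boundary arm on the other side of the gap (arm `k+1` if `i ≤ k`, arm `k`
otherwise) differs from `z*` in exactly two coordinates, so its ratio is
`(1/λ_p + 1/λ_q) / Δᵢ² ≥ 1 / (λᵢ Δᵢ²) ≥ H`. -/

open Finset

theorem Finset.exists_sum_mul_le_of_sum_eq_one {ι R : Type*} [Fintype ι] [Nonempty ι] [Field R]
    [LinearOrder R] [IsStrictOrderedRing R] (f w : ι → R) (hw : ∑ i, w i = 1) : ∃ i, (∑ j, f j) * w i ≤ f i := by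
  obtain ⟨i, -, hi⟩ := exists_le_of_sum_le univ_nonempty
    (f := fun i => (∑ j, f j) * w i) (g := f) (by rw [← mul_sum, hw, mul_one])
  exact ⟨i, hi⟩

section Swap

variable {ι 𝕜 : Type*} [DecidableEq ι] [Field 𝕜] {S : Finset ι} {p q : ι}

theorem indicator_sub_indicator_insert_erase (hp : p ∈ S) (hq : q ∉ S) (i : ι) :
    ((if i ∈ S then (1 : 𝕜) else 0) - if i ∈ insert q (S.erase p) then 1 else 0) =
      (Pi.single p 1 : ι → 𝕜) i - (Pi.single q 1 : ι → 𝕜) i := by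
  have hpq : p ≠ q := fun h => hq (h ▸ hp)
  by_cases hip : i = p
  · subst hip; simp [hp, hpq]
  by_cases hiq : i = q
  · subst hiq; simp [hq, hip]
  simp [hip, hiq]

variable [Fintype ι]

theorem Finset.insert_erase_mem_powersetCard_erase (hp : p ∈ S) (hq : q ∉ S) :
    insert q (S.erase p) ∈ (powersetCard S.card (univ : Finset ι)).erase S := by
  refine mem_erase.2 ⟨fun h => hq (h ▸ mem_insert_self q _), mem_powersetCard.2 ⟨subset_univ _, ?_⟩⟩
  rw [card_insert_of_notMem (fun h => hq (mem_of_mem_erase h)), card_erase_of_mem hp]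
  exact Nat.sub_add_cancel (card_pos.2 ⟨p, hp⟩)

theorem sum_sq_indicator_sub_insert_erase_div (hp : p ∈ S) (hq : q ∉ S) (w : ι → 𝕜) :
    ∑ i, ((if i ∈ S then (1 : 𝕜) else 0) - if i ∈ insert q (S.erase p) then 1 else 0) ^ 2 / w i =
      1 / w p + 1 / w q := by
  have hpq : p ≠ q := fun h => hq (h ▸ hp)
  have hsq : ∀ i, ((Pi.single p 1 : ι → 𝕜) i - (Pi.single q 1 : ι → 𝕜) i) ^ 2 =
      (Pi.single p 1 : ι → 𝕜) i + (Pi.single q 1 : ι → 𝕜) i := by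
    intro i
    by_cases hip : i = p
    · subst hip; simp [hpq]
    by_cases hiq : i = q <;> simp [hip, hiq, hpq.symm]
  simp_rw [indicator_sub_indicator_insert_erase hp hq, hsq, add_div, sum_add_distrib,
    Pi.single_apply, ite_div, zero_div]
  simp

theorem sum_mul_indicator_sub_insert_erase (hp : p ∈ S) (hq : q ∉ S) (θ : ι → 𝕜) :
    ∑ i, θ i * ((if i ∈ S then (1 : 𝕜) else 0) - if i ∈ insert q (S.erase p) then 1 else 0) =
      θ p - θ q := by
  simp only [indicator_sub_indicator_insert_erase hp hq, mul_sub, sum_sub_distrib, Pi.single_apply,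
    mul_ite, mul_one, mul_zero, sum_ite_eq', mem_univ, if_true]

end Swap

theorem le_inv_add_inv_div_sq {R : Type*} [Field R] [LinearOrder R] [IsStrictOrderedRing R]
    {H δ a b : R} (ha : 0 < a) (hb : 0 ≤ b) (h : H * a ≤ 1 / δ ^ 2) :
    H ≤ (1 / a + 1 / b) / δ ^ 2 := by
  rcases eq_or_ne δ 0 with rfl | hδ
  · rw [zero_pow two_ne_zero, div_zero] at h ⊢
    exact nonpos_of_mul_nonpos_left h ha
  have hδ2 : 0 < δ ^ 2 := by positivity
  calc H ≤ 1 / a / δ ^ 2 := by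
        rw [div_div, le_div_iff₀ (by positivity), ← mul_assoc]; exact (le_div_iff₀ hδ2).1 h
    _ ≤ (1 / a + 1 / b) / δ ^ 2 := by gcongr; exact le_add_of_nonneg_right (by positivity)

/-- Top-K lower bound on `ρ*`: for any design `λ` in the (interior of the)
simplex, the worst-case normalized variance is at least `H = ∑ᵢ Δᵢ⁻²`. -/
theorem topk_rho_lower_bound
    {d k : ℕ} (hk : 0 < k) (hkd : k < d)
    (θ : Fin d → ℝ)
    (ST : Finset (Fin d)) (hST : ST = (Finset.univ : Finset (Fin d)).filter (fun i : Fin d => (i : ℕ) < k))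
    (hne : ((Finset.powersetCard k (Finset.univ : Finset (Fin d))).erase ST).Nonempty)
    (Δ : Fin d → ℝ)
    (hΔ : ∀ i : Fin d, Δ i =
      if (i : ℕ) < k then θ i - θ ⟨k, hkd⟩ else θ ⟨k - 1, by omega⟩ - θ i)
    (lam : Fin d → ℝ) (hlam : ∀ i, 0 < lam i) (hsum : ∑ i, lam i = 1) :
    (∑ i, 1 / (Δ i) ^ 2) ≤
      ((Finset.powersetCard k (Finset.univ : Finset (Fin d))).erase ST).sup' hne
        (fun S =>
          (∑ i, ((if i ∈ ST then (1 : ℝ) else 0) - (if i ∈ S then 1 else 0)) ^ 2 / lam i) /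
          (∑ i, θ i * ((if i ∈ ST then (1 : ℝ) else 0) - (if i ∈ S then 1 else 0))) ^ 2) := by
  have : Nonempty (Fin d) := ⟨⟨k, hkd⟩⟩
  obtain ⟨i, hi⟩ := exists_sum_mul_le_of_sum_eq_one (fun i => 1 / Δ i ^ 2) lam hsum
  have mem_ST : ∀ j : Fin d, j ∈ ST ↔ (j : ℕ) < k := fun j => by simp [hST]
  have hcard : ST.card = k := by
    rw [show ST = Iio ⟨k, hkd⟩ by ext j; simp [mem_ST, Fin.lt_def], Fin.card_Iio]
  obtain ⟨p, hp, q, hq, hΔi, rfl | rfl⟩ :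
      ∃ p ∈ ST, ∃ q ∉ ST, θ p - θ q = Δ i ∧ (i = p ∨ i = q) := by
    by_cases hik : (i : ℕ) < k
    · exact ⟨i, (mem_ST i).2 hik, ⟨k, hkd⟩, by simp [mem_ST], by simp [hΔ, hik], .inl rfl⟩
    · exact ⟨⟨k - 1, by omega⟩, (mem_ST _).2 (by simp; omega), i, by simpa [mem_ST] using hik,
        by simp [hΔ, hik], .inr rfl⟩
  all_goals
    refine le_trans ?_ (le_sup' _ (hcard ▸ insert_erase_mem_powersetCard_erase hp hq))
    rw [sum_sq_indicator_sub_insert_erase_div hp hq, sum_mul_indicator_sub_insert_erase hp hq, hΔi]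
  · exact le_inv_add_inv_div_sq (hlam _) (hlam _).le hi
  · rw [add_comm]; exact le_inv_add_inv_div_sq (hlam _) (hlam _).le hi
end

section
/- Fix k < d, let Z = {z₁,...,z_{d−k}} ⊂ {0,1}^d where z₁ is the indicator of {1,...,k} and z_j (j ≥ 2) is the indicator of the singleton {k+j−1}, and let θ = ε·(indicator of {1,...,k}) for some ε > 0. With measurement set X = {e₁,...,e_d} and A(λ) = diag(λ), we have ρ* := inf_{λ∈simplex} max_{j≥2} ‖z₁−z_j‖²_{diag(λ)^{-1}} / ⟨θ, z₁−z_j⟩² ≤ 2(k² + d)/(kε)². -/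
/-
Take the design `λ_i = 1/(2k) + 1/(2d)` for `i < k` and `λ_i = 1/(2d)` otherwise, of total
mass `k/(2k) + d/(2d) = 1`. Every gap `⟨θ, z₁ - z_j⟩` equals `kε`, the denominator of the
bound, so it remains to see `‖z₁ - z_j‖²_{diag(λ)⁻¹} = ∑_{i<k} 1/λ_i + 1/λ_{k+j} ≤ k · 2k + 2d`.
-/

open Finset

noncomputable def blockDesign (k d : ℕ) (i : Fin d) : ℝ :=
  if (i : ℕ) < k then 1 / (2 * k) + 1 / (2 * d) else 1 / (2 * d)

lemma blockDesign_nonneg (k d : ℕ) (i : Fin d) : 0 ≤ blockDesign k d i := by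
  unfold blockDesign
  split_ifs <;> positivity

lemma sum_blockDesign {k d : ℕ} (hk : 0 < k) (hkd : k ≤ d) :
    ∑ i, blockDesign k d i = 1 := by
  have hsplit : ∀ i : Fin d, blockDesign k d i =
      (if (i : ℕ) < k then 1 / (2 * (k : ℝ)) else 0) + 1 / (2 * d) := by
    intro i
    unfold blockDesign
    split_ifs <;> ring
  have hd : (d : ℝ) ≠ 0 := by exact_mod_cast (hk.trans_le hkd).ne'
  simp only [hsplit, sum_add_distrib, sum_ite, sum_const_zero, sum_const,
    Fin.card_filter_val_lt, min_eq_right hkd, card_univ, Fintype.card_fin, nsmul_eq_mul]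
  field_simp
  norm_num

section Gap

variable {d k m : ℕ}

lemma sum_mul_indicator_sub_single (hkd : k ≤ d) (hkm : k ≤ m) (ε : ℝ) :
    ∑ i : Fin d, (if (i : ℕ) < k then ε else 0) *
        ((if (i : ℕ) < k then (1 : ℝ) else 0) - (if (i : ℕ) = m then 1 else 0)) = k * ε := by
  have hterm : ∀ i : Fin d, (if (i : ℕ) < k then ε else 0) *
      ((if (i : ℕ) < k then (1 : ℝ) else 0) - (if (i : ℕ) = m then 1 else 0)) =
        if (i : ℕ) < k then ε else 0 := by
    intro i
    split_ifs <;> first | omega | ring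
  simp only [hterm, sum_ite, sum_const_zero, sum_const, Fin.card_filter_val_lt,
    min_eq_right hkd, nsmul_eq_mul, add_zero]

lemma sum_sq_indicator_sub_single_div (hkm : k ≤ m) (hmd : m < d) (w : Fin d → ℝ) :
    ∑ i : Fin d, ((if (i : ℕ) < k then (1 : ℝ) else 0) - (if (i : ℕ) = m then 1 else 0)) ^ 2
        / w i = (∑ i : Fin d, if (i : ℕ) < k then 1 / w i else 0) + 1 / w ⟨m, hmd⟩ := by
  have hterm : ∀ i : Fin d,
      ((if (i : ℕ) < k then (1 : ℝ) else 0) - (if (i : ℕ) = m then 1 else 0)) ^ 2 / w i =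
        (if (i : ℕ) < k then 1 / w i else 0) + if i = ⟨m, hmd⟩ then 1 / w i else 0 := by
    intro i
    simp only [Fin.ext_iff]
    split_ifs <;> first | omega | ring
  simp only [hterm, sum_add_distrib, sum_ite_eq', mem_univ, if_true]

lemma sum_sq_indicator_sub_single_div_blockDesign_le (hkm : k ≤ m) (hmd : m < d) :
    ∑ i : Fin d, ((if (i : ℕ) < k then (1 : ℝ) else 0) - (if (i : ℕ) = m then 1 else 0)) ^ 2
        / blockDesign k d i ≤ 2 * ((k : ℝ) ^ 2 + d) := by
  have hlow : ∀ i : Fin d, (if (i : ℕ) < k then 1 / blockDesign k d i else 0) ≤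
      if (i : ℕ) < k then 2 * (k : ℝ) else 0 := by
    intro i
    unfold blockDesign
    split_ifs with hi
    · have hk : (0 : ℝ) < k := by exact_mod_cast (Nat.zero_le _).trans_lt hi
      calc 1 / (1 / (2 * k) + 1 / (2 * d)) ≤ 1 / (1 / (2 * (k : ℝ))) := by
            gcongr
            exact le_add_of_nonneg_right (by positivity)
        _ = 2 * k := by rw [one_div_one_div]
    · rfl
  have hmk : ¬ m < k := by omega
  rw [sum_sq_indicator_sub_single_div hkm hmd]
  calc (∑ i : Fin d, if (i : ℕ) < k then 1 / blockDesign k d i else 0)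
        + 1 / blockDesign k d ⟨m, hmd⟩
      ≤ (∑ i : Fin d, if (i : ℕ) < k then 2 * (k : ℝ) else 0) + 2 * d := by
        gcongr
        · exact hlow _
        · simp [blockDesign, hmk]
    _ = 2 * ((k : ℝ) ^ 2 + d) := by
        simp only [sum_ite, sum_const_zero, sum_const, Fin.card_filter_val_lt,
          min_eq_right (hkm.trans hmd.le), nsmul_eq_mul, add_zero]
        ring

end Gap

/-- Upper bound on `ρ*` for the instance `Z = {1_{[k]}, e_{k+1}, …, e_d}` with
`θ = ε·1_{[k]}`: some design achieves value at most `2(k² + d)/(kε)²`. -/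
theorem rho_upper_bound_instance
    {d k : ℕ} (hk : 0 < k) (hkd : k < d) (ε : ℝ) :
    ∃ lam : Fin d → ℝ, (∀ i, 0 ≤ lam i) ∧ (∑ i, lam i = 1) ∧
      Finset.univ.sup' ⟨(⟨0, by omega⟩ : Fin (d - k)), Finset.mem_univ _⟩
        (fun j : Fin (d - k) =>
          (∑ i : Fin d, ((if (i : ℕ) < k then (1 : ℝ) else 0)
              - (if (i : ℕ) = k + (j : ℕ) then 1 else 0)) ^ 2 / lam i) /
          (∑ i : Fin d, (if (i : ℕ) < k then ε else 0) *
              ((if (i : ℕ) < k then (1 : ℝ) else 0)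
                - (if (i : ℕ) = k + (j : ℕ) then 1 else 0))) ^ 2)
      ≤ 2 * ((k : ℝ) ^ 2 + d) / (k * ε) ^ 2 := by
  refine ⟨blockDesign k d, blockDesign_nonneg k d, sum_blockDesign hk hkd.le, ?_⟩
  refine Finset.sup'_le _ _ fun j _ => ?_
  have hkj : k ≤ k + j := Nat.le_add_right k j
  have hjd : k + (j : ℕ) < d := by omega
  rw [sum_mul_indicator_sub_single hkd.le hkj ε]
  gcongr
  exact sum_sq_indicator_sub_single_div_blockDesign_le hkj hjd
end
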